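/- Let G = (N, A) be a directed graph with source s and sink t, let f be a maximum s-t flow with residual graph D_f, let U be the set of nodes reachable from s in D_f and Ū its complement. If a new arc (i,j) with positive capacity is added, where i ∈ U, j ∈ Ū, and there is no directed path from j to t in D_f, then the value of the maximum s-t flow in the augmented network equals the value of the maximum flow in the original network. -/

import Mathlib

/-- A capacitated directed network: `A` is the arc relation, `u` the capacities
(zero off the arc set). -/
structure FlowNetwork (V : Type*) where
  A : V → V → Prop
  u : V → V → ℝ
  cap_nonneg : ∀ i j, 0 ≤ u i j
  cap_zero : ∀ i j, ¬ A i j → u i j = 0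

/-- `f` is a feasible `s`-`t` flow in `N`. -/
structure IsFlow {V : Type*} [Fintype V] (N : FlowNetwork V) (s t : V)
    (f : V → V → ℝ) : Prop where
  nonneg : ∀ i j, 0 ≤ f i j
  le_cap : ∀ i j, f i j ≤ N.u i j
  conserve : ∀ v, v ≠ s → v ≠ t → (∑ w, f v w) = (∑ w, f w v)

/-- The value of a flow: the net flow out of the source `s`. -/
noncomputable def flowValue {V : Type*} [Fintype V] (f : V → V → ℝ) (s : V) : ℝ :=
  (∑ w, f s w) - (∑ w, f w s)

/-- `f` is a maximum `s`-`t` flow in `N`. -/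
def IsMaxFlow {V : Type*} [Fintype V] (N : FlowNetwork V) (s t : V)
    (f : V → V → ℝ) : Prop :=
  IsFlow N s t f ∧ ∀ g, IsFlow N s t g → flowValue g s ≤ flowValue f s

/-- Arc of the residual (auxiliary) graph `D_f`: a forward arc where flow is
below capacity, or a backward arc where flow is positive. -/
def ResidualArc {V : Type*} (N : FlowNetwork V) (f : V → V → ℝ) (i j : V) : Prop :=
  (N.A i j ∧ f i j < N.u i j) ∨ (N.A j i ∧ 0 < f j i)

/-- Reachability in the residual graph `D_f`. -/
def Reaches {V : Type*} (N : FlowNetwork V) (f : V → V → ℝ) (a b : V) : Prop :=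
  Relation.ReflTransGen (ResidualArc N f) a b

/-- The network obtained by adding the new arc `(i,j)` with capacity `c`. -/
def addArc {V : Type*} [DecidableEq V] (N : FlowNetwork V) (i j : V) (c : ℝ)
    (hc : 0 ≤ c) : FlowNetwork V where
  A a b := N.A a b ∨ (a = i ∧ b = j)
  u a b := if a = i ∧ b = j then c else N.u a b
  cap_nonneg a b := by
    try dsimp only
    split
    · exact hc
    · exact N.cap_nonneg a b
  cap_zero a b h := by
    try dsimp only
    rw [if_neg (fun hab => h (Or.inr hab))]
    exact N.cap_zero a b (fun hA => h (Or.inl hA))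

/-- The network obtained by simultaneously adding the arcs of `I`, arc `a ∈ I`
getting capacity `c a`. -/
def addArcs {V : Type*} [DecidableEq V] (N : FlowNetwork V) (I : Finset (V × V))
    (c : V × V → ℝ) (hc : ∀ a ∈ I, 0 ≤ c a) : FlowNetwork V where
  A a b := N.A a b ∨ (a, b) ∈ I
  u a b := if (a, b) ∈ I then c (a, b) else N.u a b
  cap_nonneg a b := by
    try dsimp only
    split
    · next h => exact hc _ h
    · exact N.cap_nonneg a b
  cap_zero a b h := by
    try dsimp only
    rw [if_neg (fun hab => h (Or.inr hab))]
    exact N.cap_zero a b (fun hA => h (Or.inl hA))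

/-!
Let `S` be the set of vertices from which `t` cannot be reached in the residual graph of `f`.
Because `f` is maximum, `s ∈ S`: a residual walk from `s` to `t` would allow pushing a little
more flow. Every arc leaving `S` is saturated by `f` and every arc entering `S` carries no flow,
so the value of `f` is the capacity of the cut `(S, Sᶜ)`. The new arc ends at `j ∈ S`, so the
cut has the same capacity in the enlarged network, and by weak duality no flow there beats `f`,
which is still feasible.
-/

open Finset

section

variable {V : Type*}

theorem add_smul_single_mem_Icc [DecidableEq V] {u f : V → V → ℝ} (hf : f ∈ Set.Icc 0 u)
    {a b : V} {r : ℝ} (hr : f a b + r ∈ Set.Icc 0 (u a b)) :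
    f + r • (Pi.single a (Pi.single b 1) : V → V → ℝ) ∈ Set.Icc 0 u := by
  have hentry : ∀ x y, (x = a → y = b → f x y + r ∈ Set.Icc 0 (u x y)) →
      (f + r • (Pi.single a (Pi.single b 1) : V → V → ℝ)) x y ∈ Set.Icc 0 (u x y) := by
    intro x y hxy
    rcases eq_or_ne x a with rfl | hx
    · rcases eq_or_ne y b with rfl | hy
      · simpa using hxy rfl rfl
      · simpa [hy] using ⟨hf.1 x y, hf.2 x y⟩
    · simpa [hx] using ⟨hf.1 x y, hf.2 x y⟩
  exact ⟨fun x y => (hentry x y (by rintro rfl rfl; exact hr)).1,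
    fun x y => (hentry x y (by rintro rfl rfl; exact hr)).2⟩

section NetFlow

variable [Fintype V]

def netFlowOut : (V → V → ℝ) →ₗ[ℝ] V → ℝ where
  toFun g v := ∑ w, g v w - ∑ w, g w v
  map_add' g h := by ext v; simp only [Pi.add_apply, sum_add_distrib]; ring
  map_smul' c g := by ext v; simp [Finset.mul_sum, mul_sub]

theorem netFlowOut_apply (g : V → V → ℝ) (v : V) :
    netFlowOut g v = ∑ w, g v w - ∑ w, g w v := rfl

theorem flowValue_eq_netFlowOut (g : V → V → ℝ) (s : V) :
    flowValue g s = netFlowOut g s := rfl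

variable [DecidableEq V]

theorem netFlowOut_single (a b : V) :
    netFlowOut (Pi.single a (Pi.single b 1 : V → ℝ)) = Pi.single a 1 - Pi.single b 1 := by
  ext v
  by_cases hva : v = a <;> by_cases hvb : v = b <;>
    simp [netFlowOut_apply, Pi.single_apply, ite_apply, hva, hvb]

theorem sum_netFlowOut_eq_sum_cut (g : V → V → ℝ) (S : Finset V) :
    ∑ v ∈ S, netFlowOut g v = ∑ a ∈ S, ∑ b ∈ Sᶜ, (g a b - g b a) := by
  have hsplit : ∀ v, netFlowOut g v = ∑ w ∈ S, (g v w - g w v) + ∑ w ∈ Sᶜ, (g v w - g w v) := by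
    intro v
    rw [sum_add_sum_compl, sum_sub_distrib, netFlowOut_apply]
  have hinner : ∑ v ∈ S, ∑ w ∈ S, (g v w - g w v) = 0 := by
    simp only [sum_sub_distrib]
    rw [sum_comm (s := S) (t := S) (f := fun w v => g v w), sub_self]
  simp only [hsplit, sum_add_distrib, hinner, zero_add]

end NetFlow

section Flow

variable [Fintype V] {N : FlowNetwork V} {s t : V} {g : V → V → ℝ}

theorem IsFlow.mem_Icc (hg : IsFlow N s t g) : g ∈ Set.Icc 0 N.u :=
  ⟨hg.nonneg, hg.le_cap⟩

theorem IsFlow.netFlowOut_eq_zero (hg : IsFlow N s t g) {v : V} (hvs : v ≠ s) (hvt : v ≠ t) :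
    netFlowOut g v = 0 :=
  sub_eq_zero.2 (hg.conserve v hvs hvt)

theorem isFlow_of_mem_Icc (hg : g ∈ Set.Icc 0 N.u)
    (hcons : ∀ v, v ≠ s → v ≠ t → netFlowOut g v = 0) : IsFlow N s t g :=
  ⟨hg.1, hg.2, fun v hvs hvt => sub_eq_zero.1 (hcons v hvs hvt)⟩

variable [DecidableEq V] {S : Finset V}

theorem IsFlow.flowValue_eq_sum_cut (hg : IsFlow N s t g) (hs : s ∈ S) (ht : t ∉ S) :
    flowValue g s = ∑ a ∈ S, ∑ b ∈ Sᶜ, (g a b - g b a) := by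
  rw [← sum_netFlowOut_eq_sum_cut, sum_eq_single_of_mem s hs, flowValue_eq_netFlowOut]
  exact fun v hv hvs => hg.netFlowOut_eq_zero hvs (ne_of_mem_of_not_mem hv ht)

theorem IsFlow.flowValue_le_sum_cut (hg : IsFlow N s t g) (hs : s ∈ S) (ht : t ∉ S) :
    flowValue g s ≤ ∑ a ∈ S, ∑ b ∈ Sᶜ, N.u a b := by
  rw [hg.flowValue_eq_sum_cut hs ht]
  gcongr with a _ b _
  linarith [hg.le_cap a b, hg.nonneg b a]

end Flow

section Push

variable [Fintype V] [DecidableEq V] {N : FlowNetwork V} {f : V → V → ℝ}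

def CanPush (N : FlowNetwork V) (f : V → V → ℝ) (a b : V) : Prop :=
  ∃ ε > (0 : ℝ), ∃ g ∈ Set.Icc 0 N.u,
    netFlowOut g = netFlowOut f + ε • (Pi.single a 1 - Pi.single b 1)

theorem CanPush.refl (hf : f ∈ Set.Icc 0 N.u) (a : V) : CanPush N f a a :=
  ⟨1, one_pos, f, hf, by simp⟩

-- Both pushes start from `f`; weighting them so that the detour through `b` cancels keeps
-- the combination inside the convex box `Icc 0 N.u`.
theorem CanPush.trans {a b c : V} (hab : CanPush N f a b) (hbc : CanPush N f b c) :
    CanPush N f a c := by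
  obtain ⟨ε₁, hε₁, g₁, hg₁, hn₁⟩ := hab
  obtain ⟨ε₂, hε₂, g₂, hg₂, hn₂⟩ := hbc
  have hsum : 0 < ε₁ + ε₂ := add_pos hε₁ hε₂
  refine ⟨ε₁ * ε₂ / (ε₁ + ε₂), by positivity, (ε₂ / (ε₁ + ε₂)) • g₁ + (ε₁ / (ε₁ + ε₂)) • g₂,
    convex_Icc 0 N.u hg₁ hg₂ (by positivity) (by positivity) (by field_simp; ring), ?_⟩
  rw [map_add, map_smul, map_smul, hn₁, hn₂]
  ext v
  simp only [Pi.add_apply, Pi.smul_apply, Pi.sub_apply, smul_eq_mul]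
  field_simp
  ring

theorem canPush_of_residualArc (hf : f ∈ Set.Icc 0 N.u) {a b : V} (h : ResidualArc N f a b) :
    CanPush N f a b := by
  rcases h with ⟨-, hlt⟩ | ⟨-, hpos⟩
  · have hsat : f a b + (N.u a b - f a b) ∈ Set.Icc 0 (N.u a b) := by
      simp [N.cap_nonneg a b]
    refine ⟨N.u a b - f a b, sub_pos.2 hlt, _, add_smul_single_mem_Icc hf hsat, ?_⟩
    rw [map_add, map_smul, netFlowOut_single]
  · have hempty : f b a + -f b a ∈ Set.Icc 0 (N.u b a) := by
      simp [N.cap_nonneg b a]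
    refine ⟨f b a, hpos, _, add_smul_single_mem_Icc hf hempty, ?_⟩
    rw [map_add, map_smul, netFlowOut_single, neg_smul, ← smul_neg, neg_sub]

theorem canPush_of_reaches (hf : f ∈ Set.Icc 0 N.u) {a b : V} (h : Reaches N f a b) :
    CanPush N f a b := by
  induction h with
  | refl => exact CanPush.refl hf a
  | tail _ hbc ih => exact ih.trans (canPush_of_residualArc hf hbc)

theorem IsMaxFlow.not_reaches {s t : V} (hst : s ≠ t) (hf : IsMaxFlow N s t f) :
    ¬ Reaches N f s t := by
  intro hreach
  obtain ⟨ε, hε, g, hg, hng⟩ := canPush_of_reaches hf.1.mem_Icc hreach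
  have hgflow : IsFlow N s t g := isFlow_of_mem_Icc hg fun v hvs hvt => by
    simp [hng, hvs, hvt, hf.1.netFlowOut_eq_zero hvs hvt]
  have hgval : flowValue g s = flowValue f s + ε := by
    simp [flowValue_eq_netFlowOut, hng, hst]
  linarith [hf.2 g hgflow]

end Push

theorem sub_eq_cap_of_not_residualArc {N : FlowNetwork V} {f : V → V → ℝ}
    (hf : f ∈ Set.Icc 0 N.u) {a b : V} (h : ¬ ResidualArc N f a b) : f a b - f b a = N.u a b := by
  simp only [ResidualArc, not_or, not_and, not_lt] at h
  have hf0 : ∀ x y, 0 ≤ f x y := hf.1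
  have hfu : ∀ x y, f x y ≤ N.u x y := hf.2
  have hab : f a b = N.u a b := by
    by_cases hA : N.A a b
    · exact le_antisymm (hfu a b) (h.1 hA)
    · linarith [hf0 a b, hfu a b, N.cap_zero a b hA]
  have hba : f b a = 0 := by
    by_cases hA : N.A b a
    · exact le_antisymm (h.2 hA) (hf0 b a)
    · linarith [hf0 b a, hfu b a, N.cap_zero b a hA]
  rw [hab, hba, sub_zero]

section Cut

variable [Fintype V] [DecidableEq V] {N : FlowNetwork V} {s t : V} {f : V → V → ℝ}

theorem IsMaxFlow.flowValue_eq_sum_cut (hst : s ≠ t) (hf : IsMaxFlow N s t f) {S : Finset V}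
    (hS : ∀ v, v ∈ S ↔ ¬ Reaches N f v t) :
    flowValue f s = ∑ a ∈ S, ∑ b ∈ Sᶜ, N.u a b := by
  rw [hf.1.flowValue_eq_sum_cut ((hS s).2 (hf.not_reaches hst)) fun ht => (hS t).1 ht .refl]
  refine sum_congr rfl fun a ha => sum_congr rfl fun b hb => ?_
  refine sub_eq_cap_of_not_residualArc hf.1.mem_Icc fun hab => (hS a).1 ha ?_
  exact Relation.ReflTransGen.head hab (not_not.1 <| (hS b).not.1 (mem_compl.1 hb))

end Cut

section AddArc

variable [Fintype V] [DecidableEq V] {N : FlowNetwork V} {i j : V} {c : ℝ}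

theorem IsFlow.addArc {s t : V} {f : V → V → ℝ} (hf : IsFlow N s t f) (hij : ¬ N.A i j)
    (hc : 0 ≤ c) : IsFlow (addArc N i j c hc) s t f := by
  refine ⟨hf.nonneg, fun a b => ?_, hf.conserve⟩
  simp only [_root_.addArc]
  split_ifs with hab
  · obtain ⟨rfl, rfl⟩ := hab
    linarith [hf.le_cap a b, N.cap_zero a b hij]
  · exact hf.le_cap a b

omit [Fintype V] in
theorem addArc_u_of_ne (hc : 0 ≤ c) {a b : V} (hb : b ≠ j) :
    (addArc N i j c hc).u a b = N.u a b :=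
  if_neg fun hab => hb hab.2

end AddArc

end

theorem stmt2_general {V : Type*} [Fintype V] [DecidableEq V]
    (N : FlowNetwork V) (s t : V) (hst : s ≠ t)
    (f : V → V → ℝ) (hf : IsMaxFlow N s t f)
    (i j : V) (hij : ¬ N.A i j) (c : ℝ) (hc : 0 < c)
    (hjt : ¬ Reaches N f j t)
    (f' : V → V → ℝ) (hf' : IsMaxFlow (addArc N i j c hc.le) s t f') :
    flowValue f' s = flowValue f s := by
  obtain ⟨S, hS⟩ : ∃ S : Finset V, ∀ v, v ∈ S ↔ ¬ Reaches N f v t :=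
    ⟨(Set.toFinite _).toFinset, fun v => Set.Finite.mem_toFinset _⟩
  refine le_antisymm ?_ (hf'.2 f (hf.1.addArc hij hc.le))
  calc flowValue f' s
      ≤ ∑ a ∈ S, ∑ b ∈ Sᶜ, (addArc N i j c hc.le).u a b :=
        hf'.1.flowValue_le_sum_cut ((hS s).2 (hf.not_reaches hst)) fun ht => (hS t).1 ht .refl
    _ = ∑ a ∈ S, ∑ b ∈ Sᶜ, N.u a b :=
        sum_congr rfl fun a _ => sum_congr rfl fun b hb =>
          addArc_u_of_ne hc.le fun hbj => mem_compl.1 hb ((hS b).2 (hbj ▸ hjt))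
    _ = flowValue f s := (hf.flowValue_eq_sum_cut hst hS).symm

/-- adding a single arc `(i,j)` with positive capacity where
`i ∈ U`, `j ∉ U`, and there is no residual path from `j` to `t`, does not
change the maximum flow value. -/
theorem stmt2 {V : Type*} [Fintype V] [DecidableEq V]
    (N : FlowNetwork V) (s t : V) (hst : s ≠ t)
    (f : V → V → ℝ) (hf : IsMaxFlow N s t f)
    (i j : V) (hij : ¬ N.A i j) (c : ℝ) (hc : 0 < c)
    (hi : Reaches N f s i) (hj : ¬ Reaches N f s j)
    (hjt : ¬ Reaches N f j t)
    (f' : V → V → ℝ) (hf' : IsMaxFlow (addArc N i j c hc.le) s t f') :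
    flowValue f' s = flowValue f s :=
  stmt2_general N s t hst f hf i j hij c hc hjt f' hf'
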